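/- arXiv:1303.3668 — 6 statements merged into one kernel-verified Lean document; each statement's English description precedes it below -/
import Mathlib

section
/- Suppose k ≥ 2 and there exists an optimal-bandwidth (k+r, k, l) MDS code, i.e. invertible l×l matrices A i m over F (i ∈ Fin r, m ∈ Fin k) and subspaces S i m ⊆ F^l (i ∈ Fin r, m ∈ Fin k) each of dimension l/r such that: (MDS) for every t with 1 ≤ t ≤ r and all injective maps ρ : Fin t → Fin r and σ : Fin t → Fin k, the (t·l)×(t·l) block matrix whose (a,b) block is A (ρ a) (σ b) is invertible; (exact repair) for every m ∈ Fin k the family of subspaces ((S i m)·(A i m))_{i ∈ Fin r} is independent and its supremum is all of F^l; (interference alignment) for all m ≠ m' in Fin k and all i, i' ∈ Fin r, (S i m)·(A i m') = (S i' m)·(A i' m'). Then there exists an optimal-bandwidth (k-1+r, k-1, l) MDS code with constant repairing subspaces: invertible l×l matrices C i m (i ∈ Fin r, m ∈ Fin (k-1)) with C i m equal to the identity matrix when i is the largest index of Fin r and satisfying the same (MDS) block-invertibility condition, together with subspaces S' m ⊆ F^l (m ∈ Fin (k-1)) each of dimension l/r, such that for every m the family ((S' m)·(C i m))_{i ∈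 Fin r} is independent with supremum all of F^l, and for all m ≠ m' and every i ∈ Fin r, (S' m)·(C i m') = S' m. -/
section StmtAux

open Matrix

variable {F : Type*} [Field F] {l : ℕ}

lemma map_vecMul_comp (S : Submodule F (Fin l → F)) (M N : Matrix (Fin l) (Fin l) F) :
    (S.map M.vecMulLinear).map N.vecMulLinear = S.map (M * N).vecMulLinear := by
  rw [← Submodule.map_comp]
  congr 1
  apply LinearMap.ext; intro v
  simp [Matrix.vecMul_vecMul]

noncomputable def vecMulEquiv (M : Matrix (Fin l) (Fin l) F) (h : IsUnit M) :
    (Fin l → F) ≃ₗ[F] (Fin l → F) :=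
  LinearEquiv.ofLinear M.vecMulLinear M⁻¹.vecMulLinear
    (by apply LinearMap.ext; intro v; simp [Matrix.vecMul_vecMul,
        Matrix.nonsing_inv_mul M ((Matrix.isUnit_iff_isUnit_det M).mp h)])
    (by apply LinearMap.ext; intro v; simp [Matrix.vecMul_vecMul,
        Matrix.mul_nonsing_inv M ((Matrix.isUnit_iff_isUnit_det M).mp h)])

lemma vecMulEquiv_coe (M : Matrix (Fin l) (Fin l) F) (h : IsUnit M) :
    (vecMulEquiv M h : (Fin l → F) →ₗ[F] (Fin l → F)) = M.vecMulLinear := rfl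

section Block
variable {t : ℕ}

/-- Block diagonal matrix with blocks `D a`. -/
def bd (D : Fin t → Matrix (Fin l) (Fin l) F) : Matrix (Fin t × Fin l) (Fin t × Fin l) F :=
  Matrix.of fun p q => if p.1 = q.1 then D p.1 p.2 q.2 else 0

lemma bd_mul_bm (X : Fin t → Matrix (Fin l) (Fin l) F)
    (M : Fin t → Fin t → Matrix (Fin l) (Fin l) F) :
    bd X * (Matrix.of fun p q : Fin t × Fin l => M p.1 q.1 p.2 q.2) =
      Matrix.of fun p q : Fin t × Fin l => (X p.1 * M p.1 q.1) p.2 q.2 := by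
  ext ⟨a, i⟩ ⟨b, j⟩
  simp only [Matrix.mul_apply, Fintype.sum_prod_type, bd, Matrix.of_apply, ite_mul, zero_mul]
  rw [Finset.sum_comm]
  simp [Finset.sum_ite_eq, Matrix.mul_apply]

lemma bm_mul_bd (M : Fin t → Fin t → Matrix (Fin l) (Fin l) F)
    (Y : Fin t → Matrix (Fin l) (Fin l) F) :
    (Matrix.of fun p q : Fin t × Fin l => M p.1 q.1 p.2 q.2) * bd Y =
      Matrix.of fun p q : Fin t × Fin l => (M p.1 q.1 * Y q.1) p.2 q.2 := by
  ext ⟨a, i⟩ ⟨b, j⟩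
  simp only [Matrix.mul_apply, Fintype.sum_prod_type, bd, Matrix.of_apply, mul_ite, mul_zero]
  simp [Finset.sum_ite_eq, Matrix.mul_apply]

lemma bd_mul_bd (X Y : Fin t → Matrix (Fin l) (Fin l) F) :
    bd X * bd Y = bd (fun a => X a * Y a) := by
  ext ⟨a, i⟩ ⟨b, j⟩
  simp only [Matrix.mul_apply, Fintype.sum_prod_type, bd, Matrix.of_apply, ite_mul, zero_mul,
    mul_ite, mul_zero]
  rw [Finset.sum_comm]
  by_cases h : a = b <;> simp [Finset.sum_ite_eq, h, Matrix.mul_apply]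

lemma bd_one : bd (fun _ : Fin t => (1 : Matrix (Fin l) (Fin l) F)) = 1 := by
  ext ⟨a, i⟩ ⟨b, j⟩
  simp [bd, Matrix.one_apply, Prod.ext_iff, ite_and]

lemma bd_isUnit {X : Fin t → Matrix (Fin l) (Fin l) F} (h : ∀ a, IsUnit (X a)) :
    IsUnit (bd X) := by
  have hdet : ∀ a, IsUnit (X a).det := fun a => (Matrix.isUnit_iff_isUnit_det _).mp (h a)
  refine ⟨⟨bd X, bd (fun a => (X a)⁻¹), ?_, ?_⟩, rfl⟩
  · rw [bd_mul_bd, show (fun a => X a * (X a)⁻¹) = fun _ => (1 : Matrix (Fin l) (Fin l) F)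
      from funext fun a => Matrix.mul_nonsing_inv _ (hdet a), bd_one]
  · rw [bd_mul_bd, show (fun a => (X a)⁻¹ * X a) = fun _ => (1 : Matrix (Fin l) (Fin l) F)
      from funext fun a => Matrix.nonsing_inv_mul _ (hdet a), bd_one]

end Block

end StmtAux

/-- If `k ≥ 2` and there exists an optimal-bandwidth (k+r, k, l) MDS code (with possibly
non-constant repairing subspaces `S i m`), then there exists an optimal-bandwidth
(k-1+r, k-1, l) MDS code with constant repairing subspaces, normalized so that the last
row of encoding matrices consists of identity matrices. -/
theorem stmt_0 (F : Type*) [Field F] (r l k : ℕ) (hr : 2 ≤ r) (hl : 0 < l) (hk : 2 ≤ k)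
    (hrl : r ∣ l)
    (A : Fin r → Fin k → Matrix (Fin l) (Fin l) F)
    (hAinv : ∀ i m, IsUnit (A i m))
    (S : Fin r → Fin k → Submodule F (Fin l → F))
    (hdim : ∀ i m, Module.finrank F ↥(S i m) = l / r)
    -- (MDS) every t×t block submatrix is invertible
    (hMDS : ∀ t : ℕ, 1 ≤ t → t ≤ r → ∀ (ρ : Fin t → Fin r) (σ : Fin t → Fin k),
      Function.Injective ρ → Function.Injective σ →
      IsUnit (Matrix.of fun p q : Fin t × Fin l => A (ρ p.1) (σ q.1) p.2 q.2))
    -- (exact repair)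
    (hindep : ∀ m : Fin k, iSupIndep fun i : Fin r => (S i m).map (A i m).vecMulLinear)
    (hsup : ∀ m : Fin k, (⨆ i : Fin r, (S i m).map (A i m).vecMulLinear) = ⊤)
    -- (interference alignment)
    (halign : ∀ m m' : Fin k, m ≠ m' → ∀ i i' : Fin r,
      (S i m).map (A i m').vecMulLinear = (S i' m).map (A i' m').vecMulLinear) :
    ∃ (C : Fin r → Fin (k - 1) → Matrix (Fin l) (Fin l) F)
      (S' : Fin (k - 1) → Submodule F (Fin l → F)),
      (∀ i m, IsUnit (C i m)) ∧
      (∀ (i : Fin r) (m : Fin (k - 1)), (i : ℕ) = r - 1 → C i m = 1) ∧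
      (∀ t : ℕ, 1 ≤ t → t ≤ r → ∀ (ρ : Fin t → Fin r) (σ : Fin t → Fin (k - 1)),
        Function.Injective ρ → Function.Injective σ →
        IsUnit (Matrix.of fun p q : Fin t × Fin l => C (ρ p.1) (σ q.1) p.2 q.2)) ∧
      (∀ m, Module.finrank F ↥(S' m) = l / r) ∧
      (∀ m, iSupIndep fun i : Fin r => (S' m).map (C i m).vecMulLinear) ∧
      (∀ m, (⨆ i : Fin r, (S' m).map (C i m).vecMulLinear) = ⊤) ∧
      (∀ m m' : Fin (k - 1), m ≠ m' → ∀ i : Fin r,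
        (S' m).map (C i m').vecMulLinear = S' m) := by
  classical
  have hkk : k - 1 < k := by omega
  have hzz : r - 1 < r := by omega
  set ks : Fin k := ⟨k - 1, hkk⟩ with hksdef
  set z : Fin r := ⟨r - 1, hzz⟩ with hzdef
  set em : Fin (k - 1) → Fin k := fun m => ⟨m.1, by omega⟩ with hemdef
  have hem_inj : Function.Injective em := by
    intro a b h
    simp only [em, Fin.mk.injEq] at h
    exact Fin.ext h
  have hem_ne : ∀ m, em m ≠ ks := by
    intro m h
    have := congrArg Fin.val h
    simp only [em, ks] at this
    omega
  have hdet : ∀ i m, IsUnit (A i m).det :=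
    fun i m => (Matrix.isUnit_iff_isUnit_det _).mp (hAinv i m)
  have hinvU : ∀ i m, IsUnit (A i m)⁻¹ :=
    fun i m => Matrix.isUnit_nonsing_inv_iff.mpr (hAinv i m)
  set R : Fin (k - 1) → Matrix (Fin l) (Fin l) F := fun m => (A z (em m))⁻¹ * A z ks with hRdef
  have hRunit : ∀ m, IsUnit (R m) := fun m => (hinvU z (em m)).mul (hAinv z ks)
  set C : Fin r → Fin (k - 1) → Matrix (Fin l) (Fin l) F :=
    fun i m => (A i ks)⁻¹ * A i (em m) * R m with hCdef
  set S' : Fin (k - 1) → Submodule F (Fin l → F) :=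
    fun m => (S z (em m)).map (A z ks).vecMulLinear with hS'def
  have hS'i : ∀ i m, S' m = (S i (em m)).map (A i ks).vecMulLinear := by
    intro i m
    exact halign (em m) ks (hem_ne m) z i
  have hAC : ∀ i m, A i ks * C i m = A i (em m) * R m := by
    intro i m
    simp only [C]
    rw [Matrix.mul_assoc ((A i ks)⁻¹), Matrix.mul_nonsing_inv_cancel_left _ _ (hdet i ks)]
  have hAR : ∀ m, A z (em m) * R m = A z ks := by
    intro m
    simp only [R]
    rw [← Matrix.mul_assoc, Matrix.mul_nonsing_inv _ (hdet z (em m)), Matrix.one_mul]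
  have hmap : ∀ i m, (S' m).map (C i m).vecMulLinear
      = ((S i (em m)).map (A i (em m)).vecMulLinear).map (R m).vecMulLinear := by
    intro i m
    rw [hS'i i m, map_vecMul_comp, hAC, ← map_vecMul_comp]
  refine ⟨C, S', ?_, ?_, ?_, ?_, ?_, ?_, ?_⟩
  · -- units
    intro i m
    exact ((hinvU i ks).mul (hAinv i (em m))).mul (hRunit m)
  · -- last row identity
    intro i m hi
    have hiz : i = z := Fin.ext (by simpa [z] using hi)
    rw [hiz]
    simp only [C, R]
    rw [Matrix.mul_assoc ((A z ks)⁻¹), Matrix.mul_nonsing_inv_cancel_left _ _ (hdet z (em m)),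
      Matrix.nonsing_inv_mul _ (hdet z ks)]
  · -- MDS
    intro t ht1 htr ρ σ hρ hσ
    have hmid := hMDS t ht1 htr ρ (em ∘ σ) hρ (hem_inj.comp hσ)
    have key : (Matrix.of fun p q : Fin t × Fin l => C (ρ p.1) (σ q.1) p.2 q.2)
        = bd (fun a => (A (ρ a) ks)⁻¹)
          * (Matrix.of fun p q : Fin t × Fin l => A (ρ p.1) ((em ∘ σ) q.1) p.2 q.2)
          * bd (fun b => R (σ b)) := by
      rw [bd_mul_bm (fun a => (A (ρ a) ks)⁻¹) (fun a b => A (ρ a) ((em ∘ σ) b)),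
        bm_mul_bd (fun a b => (A (ρ a) ks)⁻¹ * A (ρ a) ((em ∘ σ) b)) (fun b => R (σ b))]
      rfl
    rw [key]
    exact ((bd_isUnit fun a => hinvU (ρ a) ks).mul hmid).mul (bd_isUnit fun b => hRunit (σ b))
  · -- dimension
    intro m
    have : S' m = (S z (em m)).map
        ((vecMulEquiv (A z ks) (hAinv z ks)) : (Fin l → F) →ₗ[F] (Fin l → F)) := by
      simp only [hS'def, vecMulEquiv_coe]
    rw [this, LinearEquiv.finrank_map_eq, hdim]
  · -- independence
    intro m
    have heq : (fun i : Fin r => (S' m).map (C i m).vecMulLinear)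
        = (Submodule.orderIsoMapComap (vecMulEquiv (R m) (hRunit m)))
          ∘ (fun i : Fin r => (S i (em m)).map (A i (em m)).vecMulLinear) := by
      funext i
      rw [Function.comp_apply, hmap i m]
      rfl
    rw [heq]
    exact (hindep (em m)).map_orderIso _
  · -- sup
    intro m
    have heq : ∀ i : Fin r, (S' m).map (C i m).vecMulLinear
        = ((S i (em m)).map (A i (em m)).vecMulLinear).map (R m).vecMulLinear := hmap (m := m)
    calc (⨆ i : Fin r, (S' m).map (C i m).vecMulLinear)
        = ⨆ i : Fin r, ((S i (em m)).map (A i (em m)).vecMulLinear).map (R m).vecMulLinear := by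
          exact iSup_congr heq
      _ = (⨆ i : Fin r, (S i (em m)).map (A i (em m)).vecMulLinear).map (R m).vecMulLinear := by
          rw [Submodule.map_iSup]
      _ = (⊤ : Submodule F (Fin l → F)).map (R m).vecMulLinear := by rw [hsup (em m)]
      _ = ⊤ := by
          rw [show (R m).vecMulLinear
              = ((vecMulEquiv (R m) (hRunit m)) : (Fin l → F) →ₗ[F] (Fin l → F)) from rfl,
            Submodule.map_top, LinearEquiv.range]
  · -- alignment
    intro m m' hmm' i
    rw [hS'i i m, map_vecMul_comp, hAC i m', ← map_vecMul_comp,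
      halign (em m) (em m') (fun h => hmm' (hem_inj h)) i z,
      map_vecMul_comp, hAR m']
    exact halign (em m) ks (hem_ne m) z i
end

section
/- Let d : ι → Fin l → F be a family of diagonal-entry functions with d s j ≠ 0 for all s ∈ ι and j ∈ Fin l, and let S ⊆ F^l be a subspace that is invariant under each diagonal matrix: S·(diagonal (d s)) = S for every s ∈ ι. For j ∈ Fin l let E j denote the span of the standard basis vectors {e_i : d s i = d s j for all s ∈ ι} (the joint eigenspace of the class of j). Then S decomposes along the joint eigenspaces: S = ⨆_{j ∈ Fin l} (S ⊓ E j). -/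
/-- If a subspace `S ⊆ F^l` is invariant under a family of diagonal matrices with nonzero
diagonal entries, then `S` decomposes along the joint eigenspaces: `S = ⨆ j, S ⊓ E j`,
where `E j` is the span of the standard basis vectors in the joint eigenspace class of `j`. -/
theorem stmt_3 (F : Type*) [Field F] (l : ℕ) (hl : 0 < l) (ι : Type*)
    (d : ι → Fin l → F) (hd : ∀ s j, d s j ≠ 0)
    (S : Submodule F (Fin l → F))
    (hinv : ∀ s, S.map (Matrix.diagonal (d s)).vecMulLinear = S) :
    S = ⨆ j : Fin l,
      S ⊓ Submodule.span F
        {v : Fin l → F | ∃ i : Fin l, (∀ s, d s i = d s j) ∧ v = Pi.single i (1 : F)} := by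
  classical
  -- S is closed under pointwise multiplication by each d s
  have hmul : ∀ s : ι, ∀ v ∈ S, (fun i => d s i * v i) ∈ S := by
    intro s v hv
    have : (Matrix.diagonal (d s)).vecMulLinear v ∈ S := by
      rw [← hinv s]; exact Submodule.mem_map_of_mem hv
    have heq : (Matrix.diagonal (d s)).vecMulLinear v = fun i => d s i * v i := by
      funext i
      rw [Matrix.vecMulLinear_apply, Matrix.vecMul_diagonal, mul_comm]
    rwa [heq] at this
  -- factor functions
  have hsel : ∀ i' j : Fin l, ¬ (∀ s, d s i' = d s j) → ∃ s, d s i' ≠ d s j := by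
    intro i' j h
    by_contra h'
    push_neg at h'
    exact h fun s => h' s
  set q : Fin l → Fin l → Fin l → F := fun i' j i =>
    if h : ∃ s, d s i' ≠ d s j then
      (d h.choose i - d h.choose i') / (d h.choose j - d h.choose i')
    else 1 with hq
  set χ : Fin l → Fin l → F := fun j i =>
    ∏ i' ∈ Finset.univ.filter (fun i' => ¬ ∀ s, d s i' = d s j), q i' j i with hχ
  -- χ j i = 1 when i is in the class of j
  have hχ_one : ∀ i j : Fin l, (∀ s, d s i = d s j) → χ j i = 1 := by
    intro i j hij
    apply Finset.prod_eq_one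
    intro i' hi'
    rw [Finset.mem_filter] at hi'
    have hex : ∃ s, d s i' ≠ d s j := hsel i' j hi'.2
    rw [hq]
    simp only [dif_pos hex]
    have hne : d hex.choose i' ≠ d hex.choose j := hex.choose_spec
    rw [hij hex.choose]
    exact div_self (sub_ne_zero.mpr (Ne.symm hne))
  -- χ j i = 0 when i is not in the class of j
  have hχ_zero : ∀ i j : Fin l, ¬ (∀ s, d s i = d s j) → χ j i = 0 := by
    intro i j hij
    apply Finset.prod_eq_zero (i := i) (Finset.mem_filter.mpr ⟨Finset.mem_univ i, hij⟩)
    have hex : ∃ s, d s i ≠ d s j := hsel i j hij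
    rw [hq]
    simp only [dif_pos hex]
    simp
  -- S is closed under multiplication by any product of factors q
  have hclosed : ∀ (j : Fin l) (t : Finset (Fin l)) (v : Fin l → F), v ∈ S →
      (fun i => (∏ i' ∈ t, q i' j i) * v i) ∈ S := by
    intro j t
    induction t using Finset.induction_on with
    | empty => intro v hv; simpa using hv
    | @insert a t ha ih =>
      intro v hv
      have key : (fun i => (∏ i' ∈ insert a t, q i' j i) * v i)
          = fun i => q a j i * ((∏ i' ∈ t, q i' j i) * v i) := by
        funext i
        rw [Finset.prod_insert ha, mul_assoc]
      rw [key]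
      have hw : (fun i => (∏ i' ∈ t, q i' j i) * v i) ∈ S := ih v hv
      set w : Fin l → F := fun i => (∏ i' ∈ t, q i' j i) * v i with hwdef
      by_cases hex : ∃ s, d s a ≠ d s j
      · set s := hex.choose with hs
        have : (fun i => q a j i * w i)
            = ((d s j - d s a)⁻¹) • (fun i => d s i * w i)
              + (-(d s a) * (d s j - d s a)⁻¹) • w := by
          funext i
          rw [hq]
          simp only [dif_pos hex, ← hs, Pi.add_apply, Pi.smul_apply, smul_eq_mul]
          field_simp
          ring
        rw [this]
        exact S.add_mem (S.smul_mem _ (hmul s w hw)) (S.smul_mem _ hw)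
      · have : (fun i => q a j i * w i) = w := by
          funext i
          rw [hq]
          simp only [dif_neg hex, one_mul]
        rw [this]
        exact hw
  have hχS : ∀ (j : Fin l) (v : Fin l → F), v ∈ S → (fun i => χ j i * v i) ∈ S :=
    fun j v hv => hclosed j _ v hv
  -- χ j * v lies in the span E j
  have hχE : ∀ (j : Fin l) (v : Fin l → F),
      (fun i => χ j i * v i) ∈ Submodule.span F
        {u : Fin l → F | ∃ i : Fin l, (∀ s, d s i = d s j) ∧ u = Pi.single i (1 : F)} := by
    intro j v
    have hdec : (fun i => χ j i * v i) =
        ∑ i : Fin l, (Pi.single i (χ j i * v i) : Fin l → F) := by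
      rw [Finset.univ_sum_single]
    rw [hdec]
    apply Submodule.sum_mem
    intro i _
    by_cases hij : ∀ s, d s i = d s j
    · have hsingle : (Pi.single i (χ j i * v i) : Fin l → F)
          = (χ j i * v i) • (Pi.single i (1 : F) : Fin l → F) := by
        rw [← Pi.single_smul, smul_eq_mul, mul_one]
      rw [hsingle]
      exact Submodule.smul_mem _ _ (Submodule.subset_span ⟨i, hij, rfl⟩)
    · rw [hχ_zero i j hij, zero_mul]
      rw [Pi.single_zero]
      exact Submodule.zero_mem _
  -- class representatives: minimal element of each class
  set C : Fin l → Finset (Fin l) :=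
    fun i => Finset.univ.filter (fun i' => ∀ s, d s i' = d s i) with hC
  have hCne : ∀ i, (C i).Nonempty := fun i => ⟨i, by simp [hC]⟩
  set m : Fin l → Fin l := fun i => (C i).min' (hCne i) with hm
  have hmC : ∀ i, ∀ s, d s (m i) = d s i := by
    intro i
    have hmem : m i ∈ C i := (C i).min'_mem (hCne i)
    rw [hC, Finset.mem_filter] at hmem
    exact hmem.2
  have hm_eq : ∀ i i', C i = C i' → m i = m i' := by
    intro i i' h
    apply le_antisymm
    · exact Finset.min'_le _ _ (h ▸ (C i').min'_mem (hCne i'))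
    · exact Finset.min'_le _ _ (h.symm ▸ (C i).min'_mem (hCne i))
  set R : Finset (Fin l) :=
    Finset.univ.filter (fun j => m j = j) with hR
  have hmmem : ∀ i, m i ∈ R := by
    intro i
    rw [hR, Finset.mem_filter]
    refine ⟨Finset.mem_univ _, ?_⟩
    -- m (m i) = m i : the classes C (m i) and C i coincide
    have hCeq : C (m i) = C i := by
      rw [hC]
      ext i'
      simp only [Finset.mem_filter, Finset.mem_univ, true_and]
      constructor
      · intro h s; rw [h s, hmC i s]
      · intro h s; rw [h s, hmC i s]
    exact hm_eq (m i) i hCeq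
  have hunique : ∀ i j, j ∈ R → (∀ s, d s i = d s j) → j = m i := by
    intro i j hjR hij
    rw [hR, Finset.mem_filter] at hjR
    have hCeq : C j = C i := by
      rw [hC]
      ext i'
      simp only [Finset.mem_filter, Finset.mem_univ, true_and]
      constructor
      · intro h s; rw [h s, ← hij s]
      · intro h s; rw [h s, hij s]
    rw [← hm_eq j i hCeq, hjR.2]
  have hrel_mi : ∀ i, ∀ s, d s i = d s (m i) := fun i s => (hmC i s).symm
  -- partition of unity: ∑ j ∈ R, χ j i = 1
  have hsum : ∀ i, ∑ j ∈ R, χ j i = 1 := by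
    intro i
    rw [Finset.sum_eq_single_of_mem (m i) (hmmem i)]
    · exact hχ_one i (m i) (hrel_mi i)
    · intro j hjR hne
      apply hχ_zero
      intro hij
      exact hne (hunique i j hjR hij)
  -- finish
  apply le_antisymm
  · intro v hv
    have hdecomp : v = ∑ j ∈ R, (fun i => χ j i * v i) := by
      funext i
      rw [Finset.sum_apply]
      rw [← Finset.sum_mul, hsum i, one_mul]
    rw [hdecomp]
    apply Submodule.sum_mem
    intro j _
    exact Submodule.mem_iSup_of_mem j ⟨hχS j v hv, hχE j v⟩
  · exact iSup_le fun j => inf_le_left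
end

section
/- Let x be a finite subset of Fin l and let E be the span of the standard basis vectors {e_j : j ∈ x}. Let d : Fin r → Fin l → F with d i j ≠ 0 for all i, j, with d equal to the constant function 1 at the largest index of Fin r, and set A i = diagonal(d i). Let S ⊆ E be a subspace such that the family of subspaces ((S)·(A i))_{i ∈ Fin r} is independent and its supremum equals E. If z ⊆ x is a subset such that for every i ∈ Fin r the function d i is constant on z, then r · |z| ≤ |x|. -/
open Module Submodule

-- helper: sum of finranks of independent family ≤ finrank of ambient (finite dim) module
theorem aux_sum_finrank_le {F M : Type*} [Field F] [AddCommGroup M] [Module F M]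
    [FiniteDimensional F M] {ι : Type*} [Fintype ι] [DecidableEq ι]
    (V : ι → Submodule F M) (h : iSupIndep V) :
    ∑ i, finrank F ↥(V i) ≤ finrank F ↥(⨆ i, V i) := by
  classical
  have key : ∀ s : Finset ι, ∑ i ∈ s, finrank F ↥(V i) = finrank F ↥(s.sup V) := by
    intro s
    induction s using Finset.induction with
    | empty => rw [Finset.sup_empty]; simp
    | @insert a s ha ih =>
      rw [Finset.sum_insert ha, Finset.sup_insert, ih]
      have hdisj : Disjoint (V a) (s.sup V) := by
        refine (h a).mono_right ?_
        refine Finset.sup_le fun i hi => ?_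
        exact le_iSup₂ (f := fun i (_ : i ≠ a) => V i) i (by rintro rfl; exact ha hi)
      have := Submodule.finrank_sup_add_finrank_inf_eq (V a) (s.sup V)
      rw [hdisj.eq_bot] at this
      simp only [finrank_bot, add_zero] at this
      omega
  calc ∑ i, finrank F ↥(V i) = finrank F ↥(Finset.univ.sup V) := key Finset.univ
    _ ≤ finrank F ↥(⨆ i, V i) := by
        apply Submodule.finrank_mono
        exact Finset.sup_le fun i _ => le_iSup V i

/-- Let `E` be the coordinate subspace spanned by `{e_j : j ∈ x}`, let `A i` be diagonal
matrices with nonzero entries whose last one is the identity, and let `S ≤ E` be such that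
the subspaces `S·(A i)` are independent with supremum `E`. If `z ⊆ x` and every `d i` is
constant on `z`, then `r * |z| ≤ |x|`. -/
theorem stmt_4 (F : Type*) [Field F] (r l : ℕ) (hr : 2 ≤ r) (hl : 0 < l)
    (x : Finset (Fin l))
    (E : Submodule F (Fin l → F))
    (hE : E = Submodule.span F ((fun j => Pi.single j (1 : F)) '' (x : Set (Fin l))))
    (d : Fin r → Fin l → F) (hd : ∀ i j, d i j ≠ 0)
    (hdlast : ∀ i : Fin r, (i : ℕ) = r - 1 → d i = fun _ => 1)
    (A : Fin r → Matrix (Fin l) (Fin l) F) (hA : ∀ i, A i = Matrix.diagonal (d i))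
    (S : Submodule F (Fin l → F)) (hSE : S ≤ E)
    (hindep : iSupIndep fun i : Fin r => S.map (A i).vecMulLinear)
    (hsup : (⨆ i : Fin r, S.map (A i).vecMulLinear) = E)
    (z : Finset (Fin l)) (hzx : z ⊆ x)
    (hconst : ∀ i : Fin r, ∀ j ∈ z, ∀ j' ∈ z, d i j = d i j') :
    r * z.card ≤ x.card := by
  classical
  -- trivial case z empty
  rcases z.eq_empty_or_nonempty with rfl | ⟨j0, hj0⟩
  · simp
  -- value of d i on z
  set c : Fin r → F := fun i => d i j0 with hc
  have hcne : ∀ i, c i ≠ 0 := fun i => hd i j0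
  -- vecMul by A i acts on coordinate j ∈ z as multiplication by c i
  have hvecMul : ∀ i (v : Fin l → F) (j : Fin l), ((A i).vecMulLinear v) j = v j * d i j := by
    intro i v j
    rw [Matrix.vecMulLinear_apply, hA i, Matrix.vecMul_diagonal]
  -- projection onto z-coordinates
  set π : (Fin l → F) →ₗ[F] ({j : Fin l // j ∈ z} → F) :=
    LinearMap.funLeft F F (fun k : {j : Fin l // j ∈ z} => k.1) with hπ
  -- finrank E ≤ x.card
  have hEx : finrank F E ≤ x.card := by
    rw [hE]
    have : ((fun j => Pi.single j (1 : F)) '' (x : Set (Fin l))).toFinset.card ≤ x.card := by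
      rw [Set.toFinset_image]
      simpa using (Finset.card_image_le (s := x) (f := fun j => Pi.single j (1 : F)))
    exact le_trans (finrank_span_le_card _) this
  -- each component has the same finrank as S
  have hinj : ∀ i, Function.Injective (A i).vecMulLinear := by
    intro i v w hvw
    funext j
    have := congrFun hvw j
    rw [hvecMul, hvecMul] at this
    exact mul_right_cancel₀ (hd i j) this
  have hfr : ∀ i, finrank F (S.map (A i).vecMulLinear) = finrank F S := by
    intro i
    exact (LinearEquiv.finrank_eq (Submodule.equivMapOfInjective _ (hinj i) S)).symm
  -- E.map π = ⊤
  have hEπ : E.map π = ⊤ := by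
    rw [eq_top_iff]
    intro w _
    -- w is a lin combo of π(e_j), j ∈ z
    have hbasis : w ∈ Submodule.span F
        (Set.range fun k : {j : Fin l // j ∈ z} => Pi.single k (1 : F)) := by
      have h2 := (Pi.basisFun F {j : Fin l // j ∈ z}).span_eq
      have h3 : (Set.range (Pi.basisFun F {j : Fin l // j ∈ z}))
          = Set.range fun k : {j : Fin l // j ∈ z} => Pi.single k (1 : F) := by
        ext u
        simp [Pi.basisFun_apply]
      rw [h3] at h2
      rw [h2]; trivial
    refine Submodule.span_le.mpr ?_ hbasis
    rintro _ ⟨k, rfl⟩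
    refine ⟨Pi.single (k : Fin l) (1 : F), ?_, ?_⟩
    · rw [hE]
      exact Submodule.subset_span ⟨k, hzx k.2, rfl⟩
    · funext m
      simp only [hπ, LinearMap.funLeft_apply]
      by_cases hmk : m = k
      · subst hmk; simp
      · rw [Pi.single_eq_of_ne hmk, Pi.single_eq_of_ne (fun h => hmk (Subtype.ext h))]
  -- each (S.map (A i)).map π = S.map π
  have hcomp : ∀ i, (S.map (A i).vecMulLinear).map π = S.map π := by
    intro i
    have hact : ∀ v : Fin l → F, π ((A i).vecMulLinear v) = c i • π v := by
      intro v
      funext k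
      simp only [hπ, LinearMap.funLeft_apply, Pi.smul_apply, smul_eq_mul]
      rw [hvecMul]
      rw [hconst i k.1 k.2 j0 hj0]
      ring
    apply le_antisymm
    · rintro _ ⟨_, ⟨v, hv, rfl⟩, rfl⟩
      rw [hact]
      exact Submodule.smul_mem _ _ ⟨v, hv, rfl⟩
    · rintro _ ⟨v, hv, rfl⟩
      have heq : π v = (c i)⁻¹ • π ((A i).vecMulLinear v) := by
        rw [hact, smul_smul, inv_mul_cancel₀ (hcne i), one_smul]
      rw [heq]
      exact Submodule.smul_mem _ _ (Submodule.mem_map.mpr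
        ⟨(A i).vecMulLinear v, Submodule.mem_map.mpr ⟨v, hv, rfl⟩, rfl⟩)
  -- hence S.map π = ⊤
  have hSπ : S.map π = ⊤ := by
    have : E.map π = S.map π := by
      rw [← hsup, Submodule.map_iSup]
      simp only [hcomp]
      haveI : Nonempty (Fin r) := ⟨⟨0, by omega⟩⟩
      exact iSup_const
    rw [← this, hEπ]
  -- z.card ≤ finrank S
  have hzS : z.card ≤ finrank F S := by
    have h1 : finrank F (S.map π) ≤ finrank F S := Submodule.finrank_map_le π S
    rw [hSπ] at h1
    rw [finrank_top, Module.finrank_pi] at h1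
    simpa [Fintype.card_coe] using h1
  -- conclude
  calc r * z.card ≤ r * finrank F S := Nat.mul_le_mul_left r hzS
    _ = ∑ i : Fin r, finrank F (S.map (A i).vecMulLinear) := by
        rw [Finset.sum_congr rfl fun i _ => hfr i]
        simp [Finset.sum_const, mul_comm]
    _ ≤ finrank F ↥(⨆ i : Fin r, S.map (A i).vecMulLinear) := aux_sum_finrank_le _ hindep
    _ = finrank F ↥E := by rw [hsup]
    _ ≤ x.card := hEx
end

section
/- For an optimal-access (k+r, k, l) code with constant repairing subspaces over F (normalized so that its last row of encoding matrices is the identity), for every finite subset T ⊆ Fin k the intersection of the corresponding repairing subspaces is small: (dim ⨅_{t ∈ T} S t) · r^{|T|} ≤ l (equivalently, dim ⨅_{t ∈ T} S t ≤ l / r^{|T|}). -/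
open Module Submodule

lemma aux_sum_finrank {K V ι : Type*} [Field K] [AddCommGroup V] [Module K V]
    [FiniteDimensional K V] {p : ι → Submodule K V} (hp : iSupIndep p) (s : Finset ι) :
    ∑ i ∈ s, finrank K (p i) = finrank K ↥(⨆ i ∈ s, p i) := by
  classical
  induction s using Finset.induction_on with
  | empty =>
    rw [show (⨆ i ∈ (∅ : Finset ι), p i) = ⊥ by simp]
    simp [finrank_bot]
  | @insert a s ha ih =>
    rw [Finset.sum_insert ha, ih]
    have hsup : (⨆ i ∈ insert a s, p i) = p a ⊔ ⨆ i ∈ s, p i :=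
      Finset.iSup_insert _ _ _
    have hdisj : Disjoint (p a) (⨆ i ∈ s, p i) := by
      refine (hp a).mono_right ?_
      refine iSup₂_le fun i hi => ?_
      exact le_iSup₂_of_le i (fun h : i = a => ha (h ▸ hi)) le_rfl
    rw [hsup, ← Submodule.finrank_sup_add_finrank_inf_eq, hdisj.eq_bot, finrank_bot, add_zero]

/-- For an optimal-access (k+r, k, l) code with constant repairing subspaces (normalized so
that the last row of encoding matrices is the identity), for every finite subset `T ⊆ Fin k`,
`dim (⨅ t ∈ T, S t) * r ^ |T| ≤ l`. -/
theorem stmt_6 (F : Type*) [Field F] (r l k : ℕ) (hr : 2 ≤ r) (hl : 0 < l) (hk : 0 < k)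
    (hrl : r ∣ l)
    (C : Fin r → Fin k → Matrix (Fin l) (Fin l) F)
    (hCinv : ∀ i m, IsUnit (C i m))
    (hClast : ∀ (i : Fin r) (m : Fin k), (i : ℕ) = r - 1 → C i m = 1)
    (S : Fin k → Submodule F (Fin l → F))
    (hdim : ∀ m, Module.finrank F ↥(S m) = l / r)
    (hindep : ∀ m, iSupIndep fun i : Fin r => (S m).map (C i m).vecMulLinear)
    (hsup : ∀ m, (⨆ i : Fin r, (S m).map (C i m).vecMulLinear) = ⊤)
    (halign : ∀ m m' : Fin k, m ≠ m' → ∀ i : Fin r,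
      (S m).map (C i m').vecMulLinear = S m)
    (B : Fin k → Finset (Fin l)) (hBcard : ∀ m, (B m).card = l / r)
    (haccess : ∀ m, S m =
      Submodule.span F ((fun j => Pi.single j (1 : F)) '' ((B m : Set (Fin l)))))
    (T : Finset (Fin k)) :
    Module.finrank F ↥(⨅ t ∈ T, S t) * r ^ T.card ≤ l := by
  classical
  induction T using Finset.induction_on with
  | empty =>
    have : (⨅ t ∈ (∅ : Finset (Fin k)), S t) = ⊤ := by simp
    rw [this]
    simp [finrank_top, Module.finrank_pi]
  | @insert m T hm ih =>
    set W : Submodule F (Fin l → F) := ⨅ t ∈ T, S t with hW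
    set W' : Submodule F (Fin l → F) := ⨅ t ∈ insert m T, S t with hW'
    have hW'eq : W' = S m ⊓ W := Finset.iInf_insert _ _ _
    have hW'leW : W' ≤ W := hW'eq ▸ inf_le_right
    have hW'leS : W' ≤ S m := hW'eq ▸ inf_le_left
    -- key step : finrank W' * r ≤ finrank W
    have key : finrank F ↥W' * r ≤ finrank F ↥W := by
      set f : Fin r → (Fin l → F) →ₗ[F] (Fin l → F) := fun i => (C i m).vecMulLinear with hf
      set Q : Fin r → Submodule F (Fin l → F) := fun i => W'.map (f i) with hQ
      have hWinv : ∀ i, W.map (f i) ≤ W := by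
        intro i
        refine le_iInf₂ fun t ht => ?_
        calc W.map (f i) ≤ (S t).map (f i) :=
              Submodule.map_mono (biInf_le _ ht)
          _ = S t := halign t m (fun h => hm (h ▸ ht)) i
      have hQleW : ∀ i, Q i ≤ W := fun i =>
        (Submodule.map_mono hW'leW).trans (hWinv i)
      have hQindep : iSupIndep Q :=
        (hindep m).mono fun i => Submodule.map_mono hW'leS
      have hinj : ∀ i, Function.Injective (f i) := fun i =>
        Matrix.vecMul_injective_iff_isUnit.mpr (hCinv i m)
      have hQdim : ∀ i, finrank F ↥(Q i) = finrank F ↥W' := fun i =>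
        ((W'.equivMapOfInjective (f i) (hinj i)).finrank_eq).symm
      have hsum : ∑ i : Fin r, finrank F ↥(Q i) = finrank F ↥(⨆ i ∈ Finset.univ, Q i) :=
        aux_sum_finrank hQindep Finset.univ
      have hle : (⨆ i ∈ Finset.univ, Q i) ≤ W := iSup₂_le fun i _ => hQleW i
      calc finrank F ↥W' * r = ∑ i : Fin r, finrank F ↥(Q i) := by
            simp [hQdim, mul_comm]
        _ = finrank F ↥(⨆ i ∈ Finset.univ, Q i) := hsum
        _ ≤ finrank F ↥W := Submodule.finrank_mono hle
    have ihW : finrank F ↥W * r ^ T.card ≤ l := ih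
    calc finrank F ↥W' * r ^ (insert m T).card
        = finrank F ↥W' * r * r ^ T.card := by
          rw [Finset.card_insert_of_notMem hm, pow_succ]; ring
      _ ≤ finrank F ↥W * r ^ T.card := Nat.mul_le_mul_right _ key
      _ ≤ l := ihW
end

section
/- Let C i m (i ∈ Fin r, m ∈ Fin k) be invertible l×l matrices over F and S m ⊆ F^l (m ∈ Fin k) subspaces of dimension l/r satisfying the (un-normalized) optimal-bandwidth conditions: for every m the family of subspaces ((S m)·(C i m))_{i ∈ Fin r} is independent with supremum all of F^l, and for all m ≠ m' and all i, i' ∈ Fin r, (S m)·(C i m') = (S m)·(C i' m'). Let ℓ denote the largest index of Fin r and define C' i m = C i m · (C ℓ m)⁻¹. Then each C' i m is invertible, C' ℓ m is the identity matrix for every m, and the matrices C' with the same subspaces S satisfy the normalized optimal-bandwidth conditions: for every m the family ((S m)·(C' i m))_{i ∈ Fin r} is independent with supremum all of F^l, and for all m ≠ m' and every i ∈ Fin r, (S m)·(C' i m') = S m. -/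
open Matrix

lemma vecMulLinear_mul' {F : Type*} [CommRing F] {l : ℕ} (A B : Matrix (Fin l) (Fin l) F) :
    (A * B).vecMulLinear = B.vecMulLinear ∘ₗ A.vecMulLinear := by
  refine LinearMap.ext fun v => ?_
  simp [Matrix.vecMul_vecMul]

lemma map_vecMul_mul {F : Type*} [CommRing F] {l : ℕ} (S : Submodule F (Fin l → F))
    (A B : Matrix (Fin l) (Fin l) F) :
    S.map (A * B).vecMulLinear = (S.map A.vecMulLinear).map B.vecMulLinear := by
  rw [vecMulLinear_mul', Submodule.map_comp]

noncomputable def vecMulEquivInv {F : Type*} [Field F] {l : ℕ}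
    (A : Matrix (Fin l) (Fin l) F) (hA : IsUnit A) : (Fin l → F) ≃ₗ[F] (Fin l → F) :=
  LinearEquiv.ofLinear A⁻¹.vecMulLinear A.vecMulLinear
    (by rw [← vecMulLinear_mul', Matrix.mul_nonsing_inv _ ((Matrix.isUnit_iff_isUnit_det _).mp hA)]; ext x; simp)
    (by rw [← vecMulLinear_mul', Matrix.nonsing_inv_mul _ ((Matrix.isUnit_iff_isUnit_det _).mp hA)]; ext x; simp)

/-- Normalization of an optimal-bandwidth code: if `C i m` are invertible matrices and
`S m` subspaces of dimension `l/r` satisfying the un-normalized optimal-bandwidth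
conditions, and `C' i m = C i m * (C ℓ m)⁻¹` where `ℓ` is the largest index of `Fin r`,
then the `C'` are invertible, `C' ℓ m = 1`, and together with the same subspaces `S` they
satisfy the normalized optimal-bandwidth conditions. -/
theorem stmt_10 (F : Type*) [Field F] (r l k : ℕ) (hr : 2 ≤ r) (hl : 0 < l) (hk : 0 < k)
    (hrl : r ∣ l)
    (C : Fin r → Fin k → Matrix (Fin l) (Fin l) F)
    (hCinv : ∀ i m, IsUnit (C i m))
    (S : Fin k → Submodule F (Fin l → F))
    (hdim : ∀ m, Module.finrank F ↥(S m) = l / r)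
    (hindep : ∀ m, iSupIndep fun i : Fin r => (S m).map (C i m).vecMulLinear)
    (hsup : ∀ m, (⨆ i : Fin r, (S m).map (C i m).vecMulLinear) = ⊤)
    (halign : ∀ m m' : Fin k, m ≠ m' → ∀ i i' : Fin r,
      (S m).map (C i m').vecMulLinear = (S m).map (C i' m').vecMulLinear)
    (ℓ : Fin r) (hℓ : (ℓ : ℕ) = r - 1)
    (C' : Fin r → Fin k → Matrix (Fin l) (Fin l) F)
    (hC' : ∀ i m, C' i m = C i m * (C ℓ m)⁻¹) :
    (∀ i m, IsUnit (C' i m)) ∧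
    (∀ m, C' ℓ m = 1) ∧
    (∀ m, iSupIndep fun i : Fin r => (S m).map (C' i m).vecMulLinear) ∧
    (∀ m, (⨆ i : Fin r, (S m).map (C' i m).vecMulLinear) = ⊤) ∧
    (∀ m m' : Fin k, m ≠ m' → ∀ i : Fin r,
      (S m).map (C' i m').vecMulLinear = S m) := by
  have hdet : ∀ m, IsUnit (C ℓ m).det := fun m => (Matrix.isUnit_iff_isUnit_det _).mp (hCinv ℓ m)
  have hinvU : ∀ m, IsUnit (C ℓ m)⁻¹ := fun m =>
    (Matrix.isUnit_nonsing_inv_iff).mpr (hCinv ℓ m)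
  have hmap : ∀ i m m', (S m).map (C' i m').vecMulLinear =
      ((S m).map (C i m').vecMulLinear).map
        (vecMulEquivInv (C ℓ m') (hCinv ℓ m') : (Fin l → F) →ₗ[F] (Fin l → F)) := by
    intro i m m'
    rw [hC', map_vecMul_mul]
    rfl
  refine ⟨fun i m => ?_, fun m => ?_, fun m => ?_, fun m => ?_, fun m m' hne i => ?_⟩
  · rw [hC']; exact (hCinv i m).mul (hinvU m)
  · rw [hC', Matrix.mul_nonsing_inv _ (hdet m)]
  · have := (hindep m).map_orderIso (Submodule.orderIsoMapComap (vecMulEquivInv (C ℓ m) (hCinv ℓ m)))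
    convert this using 1
    funext i
    exact hmap i m m
  · have h := hsup m
    calc (⨆ i : Fin r, (S m).map (C' i m).vecMulLinear)
        = ⨆ i : Fin r, ((S m).map (C i m).vecMulLinear).map
            (vecMulEquivInv (C ℓ m) (hCinv ℓ m) : (Fin l → F) →ₗ[F] (Fin l → F)) := by
          exact iSup_congr fun i => hmap i m m
      _ = ((⨆ i : Fin r, (S m).map (C i m).vecMulLinear)).map
            (vecMulEquivInv (C ℓ m) (hCinv ℓ m) : (Fin l → F) →ₗ[F] (Fin l → F)) := by
          rw [Submodule.map_iSup]
      _ = ⊤ := by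
          rw [h, Submodule.map_top, LinearEquiv.range]
  · rw [hmap, halign m m' hne i ℓ]
    show ((S m).map (C ℓ m').vecMulLinear).map ((C ℓ m')⁻¹).vecMulLinear = S m
    rw [← map_vecMul_mul, Matrix.mul_nonsing_inv _ (hdet m')]
    ext x; simp
end

section
/- Let V be a vector space over a field F, and let W : ι → Submodule F V be an independent family of subspaces with ⨆_i W i = V. Let U : ι → κ → Submodule F V be a doubly indexed family with U i j ≤ W i for all i, j, such that the family (U i j)_{(i,j) ∈ ι × κ} is independent and ⨆_{(i,j)} U i j = V. Then for every i, ⨆_j U i j = W i. -/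
/-- If `W` is an independent family of subspaces of `V` with supremum `⊤`, and
`U : ι → κ → Submodule F V` satisfies `U i j ≤ W i`, with the doubly indexed family
independent and of supremum `⊤`, then for every `i`, `⨆ j, U i j = W i`. -/
theorem stmt_11 (F V ι κ : Type*) [Field F] [AddCommGroup V] [Module F V]
    (W : ι → Submodule F V) (hW : iSupIndep W) (hWsup : (⨆ i, W i) = ⊤)
    (U : ι → κ → Submodule F V) (hle : ∀ i j, U i j ≤ W i)
    (hUindep : iSupIndep fun p : ι × κ => U p.1 p.2)
    (hUsup : (⨆ p : ι × κ, U p.1 p.2) = ⊤) :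
    ∀ i, (⨆ j, U i j) = W i := by
  intro i
  set S : ι → Submodule F V := fun i => ⨆ j, U i j with hS
  have hSle : ∀ i, S i ≤ W i := fun i => iSup_le (hle i)
  have hSsup : (⨆ i, S i) = ⊤ := by
    rw [← hUsup, iSup_prod]
  refine le_antisymm (hSle i) ?_
  have hsplit : (⨆ i', S i') = S i ⊔ ⨆ i' ≠ i, S i' := by
    rw [← iSup_split_single _ i]
  have : W i = W i ⊓ (S i ⊔ ⨆ i' ≠ i, S i') := by
    rw [← hsplit, hSsup, inf_top_eq]
  rw [this, inf_comm, sup_inf_assoc_of_le _ (hSle i)]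
  have hdisj : W i ⊓ ⨆ i' ≠ i, S i' ≤ S i := by
    have h1 : (⨆ i' ≠ i, S i') ≤ ⨆ i' ≠ i, W i' :=
      iSup_le fun i' => iSup_le fun h => le_trans (hSle i') (le_iSup₂ (f := fun i' _ => W i') i' h)
    have h2 : Disjoint (W i) (⨆ i' ≠ i, W i') := hW i
    calc W i ⊓ ⨆ i' ≠ i, S i' ≤ W i ⊓ ⨆ i' ≠ i, W i' := inf_le_inf_left _ h1
      _ = ⊥ := h2.eq_bot
      _ ≤ S i := bot_le
  exact sup_le le_rfl (le_trans (by rw [inf_comm]; exact hdisj) le_rfl)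
end
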